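/- arXiv:1904.08070 — 3 statements merged into one kernel-verified Lean document; each statement's English description precedes it below -/
import Mathlib

section
/- Let G be a finite group and Θ a generalized character of G taking exactly N distinct values a₀ = Θ(1), a₁, …, a_{N−1} on G, and suppose Θ(g) ≠ Θ(1) for all g ≠ 1 in G. Then every irreducible complex character χ of G occurs as an irreducible constituent of Θ^k for some 0 ≤ k ≤ N−1. -/
/-
If no power Θᵏ with k ≤ N - 1 had χ as a constituent, then by linearity neither would p(Θ) for
any polynomial p of degree at most N - 1. Take p = ∏ (X - a) over the N - 1 values a ≠ Θ(1)
of Θ: since Θ(g) ≠ Θ(1) for g ≠ 1, the class function p ∘ Θ is supported at 1, so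
[p ∘ Θ, χ] = p(Θ(1)) χ(1) / |G| ≠ 0.
-/

open scoped BigOperators

/-- Inner product of class functions on a finite group `G`. -/
noncomputable def innerChar (G : Type) [Group G] (f h : G → ℂ) : ℂ :=
  (Nat.card G : ℂ)⁻¹ * ∑ᶠ g : G, f g * (starRingEnd ℂ) (h g)

/-- `f` is the character of some finite-dimensional complex representation of `G`. -/
def IsChar (G : Type) [Group G] (f : G → ℂ) : Prop :=
  ∃ V : FDRep ℂ G, f = V.character

/-- `f` is an irreducible complex character of `G`. -/
def IsIrrChar (G : Type) [Group G] (f : G → ℂ) : Prop :=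
  ∃ V : FDRep ℂ G, CategoryTheory.Simple V ∧ f = V.character

/-- `f` is a generalized character (difference of two characters) of `G`. -/
def IsGenChar (G : Type) [Group G] (f : G → ℂ) : Prop :=
  ∃ V W : FDRep ℂ G, f = fun g => V.character g - W.character g

open scoped Classical in
noncomputable def indChar {G : Type} [Group G] (H : Subgroup G) (φ : H → ℂ) : G → ℂ :=
  fun g => (Nat.card H : ℂ)⁻¹ *
    ∑ᶠ x : G, if h : x⁻¹ * g * x ∈ H then φ ⟨x⁻¹ * g * x, h⟩ else 0

open Finset Polynomial

section PowerSums

variable {ι : Type*}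

theorem sum_eval_mul_eq_zero_of_sum_pow_mul_eq_zero {R : Type*} [CommSemiring R]
    (s : Finset ι) (f ψ : ι → R) (p : R[X])
    (h : ∀ k ≤ p.natDegree, ∑ i ∈ s, f i ^ k * ψ i = 0) :
    ∑ i ∈ s, p.eval (f i) * ψ i = 0 := by
  simp_rw [eval_eq_sum_range, sum_mul, mul_assoc]
  rw [sum_comm]
  refine sum_eq_zero fun k hk => ?_
  rw [← mul_sum, h k (Nat.lt_succ_iff.mp (mem_range.mp hk)), mul_zero]

theorem exists_sum_pow_mul_ne_zero {K : Type*} [Field K] [DecidableEq K]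
    (s : Finset ι) (f ψ : ι → K) {i₀ : ι} (hi₀ : i₀ ∈ s)
    (hf : ∀ i ∈ s, i ≠ i₀ → f i ≠ f i₀) (hψ : ψ i₀ ≠ 0) :
    ∃ k ≤ #(s.image f) - 1, ∑ i ∈ s, f i ^ k * ψ i ≠ 0 := by
  by_contra! h
  set p : K[X] := ∏ a ∈ (s.image f).erase (f i₀), (X - C a)
  have hdeg : p.natDegree = #(s.image f) - 1 := by
    rw [natDegree_prod_of_monic _ _ fun a _ => monic_X_sub_C a]
    simp [card_erase_of_mem (mem_image_of_mem f hi₀)]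
  have hvanish : ∀ i ∈ s, i ≠ i₀ → p.eval (f i) = 0 := fun i hi hne => by
    rw [eval_prod]
    exact prod_eq_zero (mem_erase.mpr ⟨hf i hi hne, mem_image_of_mem f hi⟩) (by simp)
  have hi₀_ne : p.eval (f i₀) ≠ 0 := by
    rw [eval_prod]
    exact prod_ne_zero_iff.mpr fun a ha => by
      simpa [sub_eq_zero] using (ne_of_mem_erase ha).symm
  have hsum := sum_eval_mul_eq_zero_of_sum_pow_mul_eq_zero s f ψ p (hdeg ▸ h)
  rw [sum_eq_single_of_mem i₀ hi₀ fun i hi hne => by rw [hvanish i hi hne, zero_mul]] at hsum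
  exact mul_ne_zero hi₀_ne hψ hsum

end PowerSums

theorem FDRep.character_one_ne_zero {k G : Type} [Field k] [CharZero k] [Monoid G]
    (V : FDRep k G) [CategoryTheory.Simple V] : V.character 1 ≠ 0 := by
  rw [FDRep.char_one, Nat.cast_ne_zero]
  intro h0
  have : Subsingleton V := Module.finrank_zero_iff.mp h0
  exact CategoryTheory.id_nonzero V (by ext x; exact Subsingleton.elim _ _)

theorem stmt_0_general (G : Type) [Group G] [Fintype G]
    (Θ : G → ℂ) (N : ℕ)
    (hvals : (Set.range Θ).ncard = N)
    (hne : ∀ g : G, g ≠ 1 → Θ g ≠ Θ 1) :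
    ∀ χ : G → ℂ, IsIrrChar G χ →
      ∃ k : ℕ, k ≤ N - 1 ∧ innerChar G (fun g => (Θ g) ^ k) χ ≠ 0 := by
  classical
  rintro χ ⟨V, hV, rfl⟩
  have hcard : #(univ.image Θ) = N := by
    rw [← hvals, ← Fintype.coe_image_univ, Set.ncard_coe_finset]
  obtain ⟨k, hk, hsum⟩ := exists_sum_pow_mul_ne_zero univ Θ
    (fun g => starRingEnd ℂ (V.character g)) (mem_univ 1) (fun g _ hg => hne g hg)
    (by simpa using V.character_one_ne_zero)
  refine ⟨k, hcard ▸ hk, ?_⟩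
  rw [innerChar, finsum_eq_sum_of_fintype]
  exact mul_ne_zero (by simp) hsum

/-- Burnside-type lemma: if a generalized character Θ takes exactly N values and
Θ(g) ≠ Θ(1) for g ≠ 1, then every irreducible character is a constituent of some Θ^k,
0 ≤ k ≤ N-1. -/
theorem stmt_0 (G : Type) [Group G] [Fintype G]
    (Θ : G → ℂ) (hΘ : IsGenChar G Θ) (N : ℕ)
    (hvals : (Set.range Θ).ncard = N)
    (hne : ∀ g : G, g ≠ 1 → Θ g ≠ Θ 1) :
    ∀ χ : G → ℂ, IsIrrChar G χ →
      ∃ k : ℕ, k ≤ N - 1 ∧ innerChar G (fun g => (Θ g) ^ k) χ ≠ 0 :=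
  stmt_0_general G Θ N hvals hne
end

section
/- Let G = A ⋊ H be a finite group that is a split extension of a normal abelian subgroup A by a subgroup H. Then for any χ ∈ Irr(G) and any linear character λ ∈ Irr(H), the multiplicity [χ|_H, λ]_H is at most 1. -/
/-!
The multiplicity `[χ|_H, λ]` is the trace, hence the rank, of the idempotent
`P = |H|⁻¹ ∑ λ(h⁻¹) ρ(h)` projecting `V` onto the `λ`-eigenspace of `H`. For `a ∈ A` the Hecke
operators `T a = P ρ(a) P` commute: `T x T y` is the `H`-average of `T (x h y h⁻¹)`, `T` is
invariant under conjugation by `H`, and `A` is abelian and normal. Since `G = A H` and `V` is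
irreducible, any nonzero `w ∈ range P` spans `range P` under the `T a`. Hence an eigenspace of a
single `T a` that meets `range P` contains all of it, so every `T a` is scalar on `range P`, which
is therefore spanned by `w` alone.
-/

open scoped BigOperators

open CategoryTheory Module
open scoped Pointwise

theorem Submodule.exists_le_eigenspace_of_commute {ι K V : Type*} [Field K] [IsAlgClosed K]
    [AddCommGroup V] [Module K V] [FiniteDimensional K V] {W : Submodule K V}
    {T : ι → End K V} (hTW : ∀ i, ∀ w ∈ W, T i w ∈ W) (hT : ∀ i j, Commute (T i) (T j))
    (hW : ∀ w ∈ W, w ≠ 0 → W ≤ span K (Set.range fun i => T i w)) (i : ι) :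
    ∃ c : K, W ≤ (T i).eigenspace c := by
  rcases eq_or_ne W ⊥ with rfl | hW0
  · exact ⟨0, bot_le⟩
  have : Nontrivial W := Submodule.nontrivial_iff_ne_bot.mpr hW0
  obtain ⟨c, hc⟩ := End.exists_eigenvalue ((T i).restrict (hTW i))
  obtain ⟨⟨v, hvW⟩, hv, hv0⟩ := hc.exists_hasEigenvector
  have hv' : v ∈ (T i).eigenspace c :=
    End.mem_eigenspace_iff.mpr (congrArg Subtype.val (End.mem_eigenspace_iff.mp hv))
  refine ⟨c, (hW v hvW fun h => hv0 (Subtype.ext h)).trans (span_le.mpr ?_)⟩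
  rintro _ ⟨j, rfl⟩
  exact End.mapsTo_genEigenspace_of_comm (hT i j) c 1 hv'

theorem Submodule.finrank_le_one_of_commute {ι K V : Type*} [Field K] [IsAlgClosed K]
    [AddCommGroup V] [Module K V] [FiniteDimensional K V] {W : Submodule K V}
    {T : ι → End K V} (hTW : ∀ i, ∀ w ∈ W, T i w ∈ W) (hT : ∀ i j, Commute (T i) (T j))
    (hW : ∀ w ∈ W, w ≠ 0 → W ≤ span K (Set.range fun i => T i w)) :
    finrank K W ≤ 1 := by
  rcases eq_or_ne W ⊥ with rfl | hW0
  · simp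
  obtain ⟨w, hw, hw0⟩ := exists_mem_ne_zero_of_ne_bot hW0
  have hWw : W ≤ span K {w} := by
    refine (hW w hw hw0).trans (span_le.mpr ?_)
    rintro _ ⟨i, rfl⟩
    obtain ⟨c, hc⟩ := exists_le_eigenspace_of_commute hTW hT hW i
    show T i w ∈ span K {w}
    rw [End.mem_eigenspace_iff.mp (hc hw)]
    exact smul_mem _ c (mem_span_singleton_self w)
  exact (finrank_mono hWw).trans (finrank_span_singleton hw0).le

namespace FDRep

variable {k : Type*} [Field k] {G : Type*} [Monoid G]

noncomputable def subrepresentationHom (V : FDRep k G) (σ : Subrepresentation V.ρ) :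
    FDRep.of σ.toRepresentation ⟶ V where
  hom := FGModuleCat.ofHom σ.toSubmodule.subtype
  comm _ := rfl

instance nontrivial_of_simple (V : FDRep k G) [Simple V] : Nontrivial V := by
  by_contra h
  rw [not_nontrivial_iff_subsingleton] at h
  exact id_nonzero V (by ext; exact Subsingleton.elim _ _)

theorem subrepresentation_eq_top_of_ne_bot (V : FDRep k G) [Simple V]
    (σ : Subrepresentation V.ρ) (hσ : σ ≠ ⊥) : σ = ⊤ := by
  have : Mono (subrepresentationHom V σ) :=
    ConcreteCategory.mono_of_injective _ σ.toSubmodule.injective_subtype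
  have hne : subrepresentationHom V σ ≠ 0 := by
    refine fun h => hσ (Subrepresentation.ext (eq_bot_iff.mpr fun v hv => ?_))
    exact congrArg (fun f : FDRep.of σ.toRepresentation ⟶ V => f.hom.hom ⟨v, hv⟩) h
  have : IsIso (subrepresentationHom V σ) := isIso_of_mono_of_nonzero hne
  refine Subrepresentation.ext (eq_top_iff.mpr fun v _ => ?_)
  obtain ⟨u, rfl⟩ := (isoToLinearEquiv (asIso (subrepresentationHom V σ))).surjective v
  exact u.2

instance isIrreducible_of_simple (V : FDRep k G) [Simple V] : Representation.IsIrreducible V.ρ where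
  exists_pair_ne := by
    obtain ⟨v, hv⟩ := exists_ne (0 : V)
    refine ⟨⊥, ⊤, fun h => hv ?_⟩
    have : v ∈ (⊥ : Subrepresentation V.ρ).toSubmodule := h ▸ Submodule.mem_top
    exact (Submodule.mem_bot k).mp this
  eq_bot_or_eq_top σ := or_iff_not_imp_left.mpr (subrepresentation_eq_top_of_ne_bot V σ)

end FDRep

namespace Representation

variable {k V : Type*} [Field k] [AddCommGroup V] [Module k V]

theorem span_orbit_eq_top {G : Type*} [Monoid G] (ρ : Representation k G V) [ρ.IsIrreducible]
    {w : V} (hw : w ≠ 0) : Submodule.span k (Set.range fun g => ρ g w) = ⊤ := by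
  set S := Submodule.span k (Set.range fun g => ρ g w)
  let σ : Subrepresentation ρ :=
    { toSubmodule := S
      apply_mem_toSubmodule := fun g v hv => by
        refine (Submodule.span_le (p := S.comap (ρ g))).mpr ?_ hv
        rintro _ ⟨g', rfl⟩
        exact Submodule.subset_span ⟨g * g', by simp⟩ }
  have hσ : σ ≠ ⊥ := by
    intro h
    have hwσ : w ∈ σ.toSubmodule := Submodule.subset_span ⟨1, by simp⟩
    rw [h] at hwσ
    exact hw ((Submodule.mem_bot k).mp hwσ)
  exact congrArg Subrepresentation.toSubmodule ((eq_bot_or_eq_top σ).resolve_left hσ)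

section isotypicProj

variable {H : Type*} [Group H] [Fintype H] (ρ : Representation k H V) (lam : H →* k)

noncomputable def isotypicProj : Module.End k V :=
  (Fintype.card H : k)⁻¹ • ∑ h, lam h⁻¹ • ρ h

theorem mul_isotypicProj (h : H) : ρ h * isotypicProj ρ lam = lam h • isotypicProj ρ lam := by
  rw [isotypicProj, mul_smul_comm, smul_comm (lam h)]
  congr 1
  rw [Finset.mul_sum, Finset.smul_sum, ← Equiv.sum_comp (Equiv.mulLeft h⁻¹)]
  refine Finset.sum_congr rfl fun x _ => ?_
  rw [Equiv.coe_mulLeft, mul_smul_comm, ← map_mul, mul_inv_cancel_left, smul_smul, mul_inv_rev,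
    inv_inv, map_mul, mul_comm]

theorem isotypicProj_mul (h : H) : isotypicProj ρ lam * ρ h = lam h • isotypicProj ρ lam := by
  rw [isotypicProj, smul_mul_assoc, smul_comm (lam h)]
  congr 1
  rw [Finset.sum_mul, Finset.smul_sum, ← Equiv.sum_comp (Equiv.mulRight h⁻¹)]
  refine Finset.sum_congr rfl fun x _ => ?_
  rw [Equiv.coe_mulRight, smul_mul_assoc, ← map_mul, inv_mul_cancel_right, smul_smul, mul_inv_rev,
    inv_inv, map_mul]

theorem isIdempotentElem_isotypicProj [NeZero (Fintype.card H : k)] :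
    IsIdempotentElem (isotypicProj ρ lam) := by
  have hterm (h : H) : lam h⁻¹ • ρ h * isotypicProj ρ lam = isotypicProj ρ lam := by
    rw [smul_mul_assoc, mul_isotypicProj, smul_smul, ← map_mul, inv_mul_cancel, map_one, one_smul]
  nth_rewrite 1 [IsIdempotentElem, isotypicProj]
  rw [smul_mul_assoc, Finset.sum_mul, Finset.sum_congr rfl fun h _ => hterm h, Finset.sum_const,
    Finset.card_univ, ← Nat.cast_smul_eq_nsmul k, smul_smul, inv_mul_cancel₀ (NeZero.ne _),
    one_smul]

theorem mul_isotypicProj_mul (a b : End k V) :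
    a * isotypicProj ρ lam * b = (Fintype.card H : k)⁻¹ • ∑ h, lam h⁻¹ • (a * ρ h * b) := by
  simp only [isotypicProj, mul_smul_comm, smul_mul_assoc, Finset.mul_sum, Finset.sum_mul]

theorem trace_isotypicProj :
    LinearMap.trace k V (isotypicProj ρ lam) =
      (Fintype.card H : k)⁻¹ * ∑ h, lam h⁻¹ * ρ.character h := by
  simp [isotypicProj, map_sum, character]

end isotypicProj

section heckeOp

variable {G : Type*} [Group G] (ρ : Representation k G V) {H : Subgroup G} [Fintype H]
  (lam : H →* k)

noncomputable def heckeOp (x : G) : End k V :=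
  isotypicProj (ρ.comp H.subtype) lam * ρ x * isotypicProj (ρ.comp H.subtype) lam

theorem heckeOp_mul_mul (h₁ h₂ : H) (x : G) :
    heckeOp ρ lam (h₁ * x * h₂) = (lam h₁ * lam h₂) • heckeOp ρ lam x := by
  unfold heckeOp
  set P := isotypicProj (ρ.comp H.subtype) lam
  have e₁ : P * ρ h₁ = lam h₁ • P := isotypicProj_mul (ρ.comp H.subtype) lam h₁
  have e₂ : ρ h₂ * P = lam h₂ • P := mul_isotypicProj (ρ.comp H.subtype) lam h₂
  simp only [map_mul, ← mul_assoc]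
  rw [e₁, mul_assoc _ (ρ h₂), e₂]
  simp only [smul_mul_assoc, mul_smul_comm, smul_smul, mul_comm]

theorem heckeOp_conj (h : H) (x : G) : heckeOp ρ lam (h * x * (h : G)⁻¹) = heckeOp ρ lam x := by
  rw [← Subgroup.coe_inv, heckeOp_mul_mul, ← map_mul, mul_inv_cancel, map_one, one_smul]

theorem heckeOp_mul_heckeOp [NeZero (Fintype.card H : k)] (x y : G) :
    heckeOp ρ lam x * heckeOp ρ lam y =
      (Fintype.card H : k)⁻¹ • ∑ h : H, heckeOp ρ lam (x * (h * y * (h : G)⁻¹)) := by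
  have hterm (h : H) :
      heckeOp ρ lam (x * (h * y * (h : G)⁻¹)) = lam h⁻¹ • heckeOp ρ lam (x * h * y) := by
    simpa [mul_assoc] using heckeOp_mul_mul ρ lam 1 h⁻¹ (x * h * y)
  simp_rw [hterm]
  unfold heckeOp
  set P := isotypicProj (ρ.comp H.subtype) lam
  have hP : P * P = P := (isIdempotentElem_isotypicProj _ lam).eq
  calc P * ρ x * P * (P * ρ y * P) = P * ρ x * (P * P) * (ρ y * P) := by simp only [mul_assoc]
    _ = P * ρ x * P * (ρ y * P) := by rw [hP]
    _ = _ := by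
        rw [mul_isotypicProj_mul]
        simp only [map_mul, mul_assoc]
        rfl

theorem heckeOp_commute [NeZero (Fintype.card H : k)] {A : Subgroup G} [A.Normal]
    (hab : ∀ a b : G, a ∈ A → b ∈ A → a * b = b * a) {a b : G} (ha : a ∈ A) (hb : b ∈ A) :
    Commute (heckeOp ρ lam a) (heckeOp ρ lam b) := by
  rw [Commute, SemiconjBy, heckeOp_mul_heckeOp, heckeOp_mul_heckeOp]
  congr 1
  refine Fintype.sum_equiv (Equiv.inv H) _ _ fun h => ?_
  conv_rhs => rw [← heckeOp_conj ρ lam h]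
  congr 1
  calc a * (h * b * (h : G)⁻¹) = (h * b * (h : G)⁻¹) * a := hab _ _ ha (‹A.Normal›.conj_mem b hb h)
    _ = _ := by simp only [Equiv.inv_apply, Subgroup.coe_inv]; group

theorem range_isotypicProj_le_span_heckeOp [NeZero (Fintype.card H : k)] [ρ.IsIrreducible]
    {A : Subgroup G} (hAH : (A : Set G) * (H : Set G) = Set.univ) {w : V}
    (hw : w ∈ LinearMap.range (isotypicProj (ρ.comp H.subtype) lam)) (hw0 : w ≠ 0) :
    LinearMap.range (isotypicProj (ρ.comp H.subtype) lam) ≤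
      Submodule.span k (Set.range fun a : A => heckeOp ρ lam a w) := by
  have hPw : isotypicProj (ρ.comp H.subtype) lam w = w :=
    (LinearMap.IsIdempotentElem.isProj_range _ (isIdempotentElem_isotypicProj _ lam)).map_id w hw
  rw [LinearMap.range_eq_map, ← span_orbit_eq_top ρ hw0, Submodule.map_span, Submodule.span_le]
  rintro _ ⟨_, ⟨g, rfl⟩, rfl⟩
  obtain ⟨a, ha, h, hh, rfl⟩ := Set.mem_mul.mp (hAH ▸ Set.mem_univ g)
  have key :
      isotypicProj (ρ.comp H.subtype) lam (ρ (a * h) w) = lam ⟨h, hh⟩ • heckeOp ρ lam a w := by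
    have := heckeOp_mul_mul ρ lam 1 ⟨h, hh⟩ a
    rw [map_one, one_mul, Subgroup.coe_one, one_mul] at this
    rw [← LinearMap.smul_apply, ← this, heckeOp, Module.End.mul_apply, Module.End.mul_apply, hPw]
  rw [SetLike.mem_coe, key]
  exact Submodule.smul_mem _ _ (Submodule.subset_span ⟨⟨a, ha⟩, rfl⟩)

theorem finrank_range_isotypicProj_le_one [IsAlgClosed k] [FiniteDimensional k V]
    [NeZero (Fintype.card H : k)] [ρ.IsIrreducible] {A : Subgroup G} [A.Normal]
    (hab : ∀ a b : G, a ∈ A → b ∈ A → a * b = b * a) (hAH : (A : Set G) * (H : Set G) = Set.univ) :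
    finrank k (LinearMap.range (isotypicProj (ρ.comp H.subtype) lam)) ≤ 1 :=
  Submodule.finrank_le_one_of_commute (T := fun a : A => heckeOp ρ lam a)
    (fun _ _ _ => ⟨_, rfl⟩) (fun a b => heckeOp_commute ρ lam hab a.2 b.2)
    (fun _ hw hw0 => range_isotypicProj_le_span_heckeOp ρ lam hAH hw hw0)

end heckeOp

end Representation

theorem MonoidHom.inv_apply_eq_conj {H : Type*} [Group H] [Finite H] (lam : H →* ℂ) (h : H) :
    (lam h)⁻¹ = starRingEnd ℂ (lam h) :=
  Complex.inv_eq_conj (lam.isOfFinOrder (isOfFinOrder_of_finite h)).norm_eq_one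

/-- If G = A ⋊ H with A normal abelian, χ ∈ Irr(G) and λ a linear character of H,
then [χ|_H, λ]_H ≤ 1. -/
theorem stmt_5 (G : Type) [Group G] [Fintype G] (A H : Subgroup G)
    [A.Normal] (hab : ∀ a b : G, a ∈ A → b ∈ A → a * b = b * a)
    (hcomp : Subgroup.IsComplement' A H)
    (χ : G → ℂ) (hχ : IsIrrChar G χ) (lam : H →* ℂ) :
    ‖innerChar H (fun h => χ ↑h) (fun h => lam h)‖ ≤ 1 := by
  obtain ⟨V, _, rfl⟩ := hχ
  have : Fintype H := Fintype.ofFinite H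
  have hinner : innerChar H (fun h => V.character h) (fun h => lam h) =
      LinearMap.trace ℂ V (Representation.isotypicProj (V.ρ.comp H.subtype) lam) := by
    rw [innerChar, finsum_eq_sum_of_fintype, Nat.card_eq_fintype_card,
      Representation.trace_isotypicProj]
    congr 1
    refine Finset.sum_congr rfl fun h _ => ?_
    rw [map_inv, MonoidHom.inv_apply_eq_conj, mul_comm]
    rfl
  rw [hinner, (LinearMap.IsIdempotentElem.isProj_range _
      (Representation.isIdempotentElem_isotypicProj _ lam)).trace,
    Complex.norm_natCast]
  exact_mod_cast Representation.finrank_range_isotypicProj_le_one V.ρ lam hab hcomp.mul_eq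
end

section
/- For a prime power q and integers 0 ≤ i ≤ j, the Gaussian binomial coefficient satisfies binom(j,i)_q < (32/9)·q^{i(j−i)}. -/
/-!
Pulling `q ^ i` out of every factor of the denominator gives
`∏_{t<i} (q^i - q^t) = q^(i*i) · ∏_{s<i} (1 - q^-(s+1))`, while the numerator is at most
`q^(i*j)`. So the quotient is at most `q^(i*(j-i))` divided by the partial Euler product
`∏_{s<i} (1 - q^-(s+1))`, which only grows with `q`. At `q = 2` the invariant
`∏_{s<n} (1 - 2^-(s+1)) ≥ 9/32 + (3/8)·2^-n` holds from `n = 2` on, keeping the product above `9/32`.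
-/

open Finset

lemma prod_range_pow_sub_pow {K : Type*} [Field K] {x : K} (hx : x ≠ 0) (n : ℕ) :
    ∏ t ∈ range n, (x ^ n - x ^ t) = x ^ (n * n) * ∏ s ∈ range n, (1 - x⁻¹ ^ (s + 1)) := by
  have hpow : x ^ (n * n) = ∏ _t ∈ range n, x ^ n := by rw [prod_const, card_range, ← pow_mul]
  rw [hpow, ← prod_range_reflect (fun s => 1 - x⁻¹ ^ (s + 1)), ← prod_mul_distrib]
  refine prod_congr rfl fun t ht => ?_
  have htn : t < n := mem_range.1 ht
  have hsplit : x ^ n = x ^ t * x ^ (n - t) := by rw [← pow_add, Nat.add_sub_cancel' htn.le]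
  rw [show n - 1 - t + 1 = n - t by omega, mul_sub, mul_one, hsplit, inv_pow,
    mul_assoc, mul_inv_cancel₀ (pow_ne_zero _ hx), mul_one]

lemma prod_range_pow_sub_pow_le {R : Type*} [CommRing R] [LinearOrder R] [IsStrictOrderedRing R]
    {x : R} (hx : 1 ≤ x) {i j : ℕ} (hij : i ≤ j) :
    ∏ t ∈ range i, (x ^ j - x ^ t) ≤ x ^ (i * j) := by
  calc ∏ t ∈ range i, (x ^ j - x ^ t) ≤ ∏ _t ∈ range i, x ^ j := by
        refine prod_le_prod (fun t ht => ?_) fun t _ => ?_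
        · have : x ^ t ≤ x ^ j := pow_le_pow_right₀ hx (by simp at ht; omega)
          linarith
        · have : 0 ≤ x ^ t := pow_nonneg (by linarith) t
          linarith
    _ = x ^ (i * j) := by rw [prod_const, card_range, ← pow_mul, Nat.mul_comm]

lemma add_le_prod_range_one_sub_half_pow {n : ℕ} (hn : 2 ≤ n) :
    9 / 32 + 3 / 8 * (1 / 2 : ℝ) ^ n ≤ ∏ s ∈ range n, (1 - (1 / 2 : ℝ) ^ (s + 1)) := by
  induction n, hn using Nat.le_induction with
  | base => norm_num [prod_range_succ]
  | succ n hn ih =>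
    have hy : (1 / 2 : ℝ) ^ n ≤ 1 / 4 := by
      calc (1 / 2 : ℝ) ^ n ≤ (1 / 2) ^ 2 := pow_le_pow_of_le_one (by norm_num) (by norm_num) hn
        _ = 1 / 4 := by norm_num
    have hy0 : (0 : ℝ) < (1 / 2) ^ n := by positivity
    rw [prod_range_succ, pow_succ]
    nlinarith [mul_le_mul_of_nonneg_right ih (show (0 : ℝ) ≤ 1 - (1 / 2) ^ n * (1 / 2) by nlinarith)]

lemma lt_prod_range_one_sub_half_pow (n : ℕ) :
    (9 / 32 : ℝ) < ∏ s ∈ range n, (1 - (1 / 2 : ℝ) ^ (s + 1)) := by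
  rcases Nat.lt_or_ge n 2 with hn | hn
  · interval_cases n <;> norm_num
  · linarith [add_le_prod_range_one_sub_half_pow hn, pow_pos (one_half_pos (α := ℝ)) n]

lemma lt_prod_range_one_sub_pow {x : ℝ} (hx0 : 0 ≤ x) (hx : x ≤ 1 / 2) (n : ℕ) :
    (9 / 32 : ℝ) < ∏ s ∈ range n, (1 - x ^ (s + 1)) := by
  refine (lt_prod_range_one_sub_half_pow n).trans_le (prod_le_prod (fun s _ => ?_) fun s _ => ?_)
  · linarith [pow_le_one₀ (n := s + 1) (by norm_num : (0 : ℝ) ≤ 1 / 2) (by norm_num)]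
  · linarith [pow_le_pow_left₀ hx0 hx (s + 1)]

/-- The Gaussian binomial coefficient satisfies binom(j,i)_q < (32/9)·q^{i(j−i)}. -/
theorem stmt_6 (q : ℕ) (hq : 2 ≤ q) (i j : ℕ) (hij : i ≤ j) :
    (∏ t ∈ Finset.range i, ((q : ℝ) ^ j - (q : ℝ) ^ t)) /
      (∏ t ∈ Finset.range i, ((q : ℝ) ^ i - (q : ℝ) ^ t)) <
    32 / 9 * (q : ℝ) ^ (i * (j - i)) := by
  have hq2 : (2 : ℝ) ≤ q := by exact_mod_cast hq
  have hq0 : (0 : ℝ) < q := by linarith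
  have hP : 9 / 32 < ∏ s ∈ range i, (1 - (q : ℝ)⁻¹ ^ (s + 1)) :=
    lt_prod_range_one_sub_pow (by positivity) (by rw [one_div]; exact inv_anti₀ two_pos hq2) i
  have hqii := pow_pos hq0 (i * i)
  have hqij := pow_pos hq0 (i * (j - i))
  rw [prod_range_pow_sub_pow hq0.ne' i, div_lt_iff₀ (by positivity)]
  calc ∏ t ∈ range i, ((q : ℝ) ^ j - (q : ℝ) ^ t) ≤ (q : ℝ) ^ (i * j) :=
        prod_range_pow_sub_pow_le (by linarith) hij
    _ = (q : ℝ) ^ (i * i) * (q : ℝ) ^ (i * (j - i)) := by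
        rw [← pow_add, ← Nat.mul_add, Nat.add_sub_cancel' hij]
    _ < _ := by nlinarith [mul_pos hqii hqij]
end
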